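/- arXiv:2001.11601 — 3 statements merged into one kernel-verified Lean document; each statement's English description precedes it below -/
import Mathlib

section
/- Let $p$ be a prime and $0 \le r < s$ integers with $p \mid (r+1)$ and $p \nmid (s-r)$. Then for every tuple $\underline{\alpha} \in \mathbb{N}^{s-r+1}$ with $\sum_{i} \alpha_i = r+1$ and $\sum_{i} i\,\alpha_i = s-r$, the multinomial coefficient $\binom{r+1}{\alpha_0,\dots,\alpha_{s-r}}$ is divisible by $p$. -/
theorem stmt3 {p : ℕ} (hp : p.Prime) (r s : ℕ) (hrs : r < s)
    (hdvd : p ∣ (r + 1)) (hnd : ¬ p ∣ (s - r))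
    (α : Fin (s - r + 1) → ℕ) (hsum : ∑ i, α i = r + 1)
    (hnorm : ∑ i : Fin (s - r + 1), i.val * α i = s - r) :
    p ∣ Nat.multinomial Finset.univ α := by
  -- there is some j with p ∤ α j
  obtain ⟨j, hj⟩ : ∃ j, ¬ p ∣ α j := by
    by_contra h
    push_neg at h
    exact hnd (hnorm ▸ Finset.dvd_sum fun i _ => (h i).mul_left i.val)
  -- choose (r+1) (α j) divides the multinomial
  have hsplit : Nat.multinomial Finset.univ α
      = (r + 1).choose (α j) * Nat.multinomial (Finset.univ.erase j) α := by
    have h1 := Nat.multinomial_insert (Finset.notMem_erase j Finset.univ) α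
    rw [Finset.insert_erase (Finset.mem_univ j)] at h1
    rw [h1]
    congr 2
    rw [← hsum, ← Finset.sum_erase_add Finset.univ α (Finset.mem_univ j), Nat.add_comm]
  -- p divides choose (r+1) (α j)
  have hαpos : α j ≠ 0 := fun h => hj (h ▸ dvd_zero p)
  obtain ⟨m, hm⟩ := Nat.exists_eq_succ_of_ne_zero hαpos
  have key : (r + 1) * r.choose m = (r + 1).choose (m + 1) * (m + 1) :=
    Nat.add_one_mul_choose_eq r m
  have hpd : p ∣ (r + 1).choose (m + 1) * (m + 1) := key ▸ hdvd.mul_right _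
  have : p ∣ (r + 1).choose (m + 1) := by
    rcases (Nat.Prime.dvd_mul hp).mp hpd with h | h
    · exact h
    · exact absurd (hm ▸ h) hj
  rw [hsplit, hm]
  exact this.mul_right _
end

section
/- Let $p$ be a prime, $\mathcal{K}$ a field of characteristic $p$ with a non-Archimedean absolute value, and $\lambda \in \mathcal{K}$ with $0 < |1-\lambda| < 1$. Set $\mu := 1-\lambda$. For every integer $r \ge 1$ with $\ell = \mathrm{val}_p(r)$, one has $|1-\lambda^r| = |\mu|^{p^\ell}$, and if moreover $p \nmid (r/p^\ell - 0)$ then $\left|\,(1-\lambda^r) - \tfrac{r}{p^\ell}\,\mu^{p^\ell}\right| < |\mu|^{p^\ell}$, where $\tfrac{r}{p^\ell}$ denotes the image of that integer in $\mathbb{F}_p \subseteq \mathcal{K}$. -/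
-- nonarchimedean: v(a+b) = v a when v b < v a
private lemma nonarch_add_eq {K : Type*} [Field K] (v : AbsoluteValue K ℝ)
    (hv : IsNonarchimedean v) {a b : K} (h : v b < v a) : v (a + b) = v a := by
  have h1 : v (a + b) ≤ max (v a) (v b) := hv a b
  have h2 : v a ≤ max (v (a + b)) (v b) := by
    have := hv (a + b) (-b)
    simpa using this
  rcases le_total (v (a+b)) (v b) with h3 | h3
  · exfalso
    have : v a ≤ v b := h2.trans (max_le h3 le_rfl)
    linarith
  · have h4 : v (a + b) ≤ v a := h1.trans (max_le le_rfl h.le)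
    have h5 : v a ≤ v (a + b) := h2.trans (max_le le_rfl h3)
    linarith

-- binomial expansion with controlled remainder
private lemma binom_expand {K : Type*} [Field K] (v : AbsoluteValue K ℝ)
    (hv : IsNonarchimedean v) (hnat : ∀ n : ℕ, v ((n : K)) ≤ 1)
    (t : K) (ht : v t ≤ 1) :
    ∀ m : ℕ, ∃ c : K, (1 - t) ^ m = 1 - (m : K) * t + t ^ 2 * c ∧ v c ≤ 1 := by
  intro m
  induction m with
  | zero => exact ⟨0, by ring, by simp⟩
  | succ n ih =>
    obtain ⟨c, hc, hvc⟩ := ih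
    refine ⟨(n : K) + c * (1 - t), ?_, ?_⟩
    · have : (1 - t) ^ (n + 1) = (1 - t) ^ n * (1 - t) := by ring
      rw [this, hc]
      push_cast
      ring
    · have h1t : v (1 - t) ≤ 1 := by
        have := hv 1 (-t)
        simpa [sub_eq_add_neg] using this.trans (max_le (by simp) (by simpa using ht))
      have := hv ((n : K)) (c * (1 - t))
      refine this.trans (max_le (hnat n) ?_)
      rw [v.map_mul]
      calc v c * v (1 - t) ≤ 1 * 1 := by
            apply mul_le_mul hvc h1t (v.nonneg _) zero_le_one
        _ = 1 := by ring

theorem stmt10 {p : ℕ} (hp : p.Prime) {K : Type*} [Field K] [CharP K p]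
    (v : AbsoluteValue K ℝ) (hv : IsNonarchimedean v) (lam : K)
    (h0 : 0 < v (1 - lam)) (h1 : v (1 - lam) < 1) (r : ℕ) (hr : 1 ≤ r) :
    v (1 - lam ^ r) = v (1 - lam) ^ p ^ padicValNat p r ∧
    (¬ p ∣ r / p ^ padicValNat p r →
      v ((1 - lam ^ r) - ((r / p ^ padicValNat p r : ℕ) : K) * (1 - lam) ^ p ^ padicValNat p r)
        < v (1 - lam) ^ p ^ padicValNat p r) := by
  haveI := Fact.mk hp
  set ℓ := padicValNat p r with hℓ
  set m := r / p ^ ℓ with hm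
  set μ := 1 - lam with hμ
  -- basic facts about casts of naturals
  have hfix : ∀ n : ℕ, ((n : K)) ^ p = (n : K) := by
    intro n
    let f := ZMod.castHom (dvd_refl p) K
    have h1 : ((n : K)) = f (n : ZMod p) := by simp [f]
    rw [h1, ← map_pow, ZMod.pow_card]
  have hone : ∀ a : ℝ, 0 < a → a ^ p = a → a = 1 := by
    intro a ha hap
    rcases lt_trichotomy a 1 with hlt | heq | hgt
    · exfalso
      have := pow_lt_pow_right_of_lt_one₀ ha hlt hp.one_lt
      simp only [pow_one] at this; nlinarith
    · exact heq
    · exfalso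
      have h2 : a ^ 1 < a ^ p := pow_lt_pow_right₀ hgt hp.one_lt
      simp only [pow_one] at h2; linarith
  have hnat : ∀ n : ℕ, v ((n : K)) ≤ 1 := by
    intro n
    rcases eq_or_ne ((n : K)) 0 with h | h
    · simp [h]
    · have : v ((n : K)) ^ p = v ((n : K)) := by rw [← v.map_pow, hfix]
      exact (hone _ (v.pos h) this).le
  -- decompose r
  have hr0 : r ≠ 0 := by omega
  have hrd : r = p ^ ℓ * m := (Nat.mul_div_cancel' pow_padicValNat_dvd).symm
  have hpm : ¬ p ∣ m := by
    have := Nat.not_dvd_ordCompl hp hr0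
    rwa [Nat.factorization_def r hp] at this
  have hm0 : (m : K) ≠ 0 := by
    rw [Ne, CharP.cast_eq_zero_iff K p]
    exact hpm
  have hvm : v ((m : K)) = 1 := by
    have : v ((m : K)) ^ p = v ((m : K)) := by rw [← v.map_pow, hfix]
    exact hone _ (v.pos hm0) this
  -- Frobenius
  set ν := μ ^ p ^ ℓ with hν
  have hlam : lam ^ p ^ ℓ = 1 - ν := by
    have : lam = 1 - μ := by rw [hμ]; ring
    rw [this, sub_pow_char_pow, one_pow]
  have hνv : v ν = v μ ^ p ^ ℓ := by rw [hν, v.map_pow]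
  have hνpos : 0 < v ν := by rw [hνv]; positivity
  have hνlt : v ν < 1 := by
    rw [hνv]
    calc v μ ^ p ^ ℓ ≤ v μ ^ 1 :=
          pow_le_pow_of_le_one h0.le h1.le (Nat.one_le_pow _ _ hp.pos)
      _ < 1 := by simpa using h1
  have hνle : v ν ≤ 1 := hνlt.le
  obtain ⟨c, hc, hvc⟩ := binom_expand v hv hnat ν hνle m
  have hkey : 1 - lam ^ r = (m : K) * ν + (-(ν ^ 2 * c)) := by
    rw [hrd, pow_mul, hlam, hc]; ring
  have hrem : v (-(ν ^ 2 * c)) < v ((m : K) * ν) := by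
    rw [v.map_neg, v.map_mul, v.map_mul, hvm, one_mul, v.map_pow]
    calc v ν ^ 2 * v c ≤ v ν ^ 2 * 1 := by
          apply mul_le_mul_of_nonneg_left hvc (by positivity)
      _ = v ν * v ν := by ring
      _ < 1 * v ν := by apply mul_lt_mul_of_pos_right hνlt hνpos
      _ = v ν := by ring
  have hmain : v (1 - lam ^ r) = v ν := by
    rw [hkey, nonarch_add_eq v hv hrem, v.map_mul, hvm, one_mul]
  constructor
  · rw [hmain, hνv]
  · intro _
    have hdiff : (1 - lam ^ r) - (m : K) * ν = -(ν ^ 2 * c) := by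
      rw [hkey]; ring
    rw [hdiff]
    calc v (-(ν ^ 2 * c)) < v ((m : K) * ν) := hrem
      _ = v ν := by rw [v.map_mul, hvm, one_mul]
      _ = v μ ^ p ^ ℓ := hνv
end

section
/- Let $f(z) = z(\lambda + \sum_{n\ge1} a_n z^n)$ be a formal power series over a field $\mathcal{K}$ with $\lambda$ not a root of unity. Then there exists a unique formal power series $h(z) = z\sum_{n\ge0} b_n z^n \in \mathcal{K}[[z]]$ with $b_0 = 1$ such that $h \circ f = \lambda \cdot h$ (as formal power series). -/
/-!
Comparing coefficients of `z^{n+1}` in `h ∘ f = λ h` gives, for `h = ∑ b_ℓ z^{ℓ+1}`, a lower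
triangular linear system `∑_{ℓ ≤ n} b_ℓ [z^{n+1}] f^{ℓ+1} = λ b_n`. Its diagonal entries are
`[z^{n+1}] f^{n+1} = λ^{n+1}`, so the equation for `n = 0` is automatic and, for `n ≥ 1`, the
coefficient `λ - λ^{n+1}` of the unknown `b_n` is nonzero because `λ` is not a root of unity.
Forward substitution from `b_0 = 1` therefore determines the solution uniquely.
-/

namespace PowerSeries

theorem coeff_self_pow_of_constantCoeff_eq_zero {R : Type*} [CommSemiring R] {φ : R⟦X⟧}
    (hφ : constantCoeff φ = 0) (n : ℕ) : coeff n (φ ^ n) = coeff 1 φ ^ n := by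
  obtain ⟨ψ, rfl⟩ := X_dvd_iff.mpr hφ
  simpa [mul_pow] using coeff_X_pow_mul (ψ ^ n) n 0

end PowerSeries

section TriangularSystem

variable {K : Type*} [Field K] (lam : K) (c : ℕ → ℕ → K)

/-- Forward substitution for the system `∑_{ℓ ≤ n} b ℓ * c n ℓ = lam * b n` with `b 0 = 1`. -/
noncomputable def triangularSolution : ℕ → K
  | 0 => 1
  | n + 1 =>
      (∑ ℓ ∈ (Finset.range (n + 1)).attach, triangularSolution ℓ * c (n + 1) ℓ) /
        (lam - c (n + 1) (n + 1))
  decreasing_by exact Finset.mem_range.mp ℓ.2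

theorem triangularSolution_zero : triangularSolution lam c 0 = 1 := by
  rw [triangularSolution]

theorem triangularSolution_succ (n : ℕ) :
    triangularSolution lam c (n + 1) =
      (∑ ℓ ∈ Finset.range (n + 1), triangularSolution lam c ℓ * c (n + 1) ℓ) /
        (lam - c (n + 1) (n + 1)) := by
  rw [triangularSolution,
    Finset.sum_attach (Finset.range (n + 1)) (fun ℓ => triangularSolution lam c ℓ * c (n + 1) ℓ)]

variable {lam c}

theorem triangular_equation_succ_iff {n : ℕ} (hn : c (n + 1) (n + 1) ≠ lam) (b : ℕ → K) :
    ∑ ℓ ∈ Finset.range (n + 2), b ℓ * c (n + 1) ℓ = lam * b (n + 1) ↔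
      b (n + 1) = (∑ ℓ ∈ Finset.range (n + 1), b ℓ * c (n + 1) ℓ) / (lam - c (n + 1) (n + 1)) := by
  rw [eq_div_iff (sub_ne_zero.mpr hn.symm), Finset.sum_range_succ]
  constructor <;> intro h <;> linear_combination -h

theorem triangularSolution_spec (h0 : c 0 0 = lam) (hdiag : ∀ n, c (n + 1) (n + 1) ≠ lam) (n : ℕ) :
    ∑ ℓ ∈ Finset.range (n + 1), triangularSolution lam c ℓ * c n ℓ =
      lam * triangularSolution lam c n := by
  cases n with
  | zero => simp [h0, mul_comm]
  | succ n => exact (triangular_equation_succ_iff (hdiag n) _).mpr (triangularSolution_succ lam c n)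

theorem eq_triangularSolution (hdiag : ∀ n, c (n + 1) (n + 1) ≠ lam) {b : ℕ → K} (hb0 : b 0 = 1)
    (hb : ∀ n, ∑ ℓ ∈ Finset.range (n + 1), b ℓ * c n ℓ = lam * b n) :
    b = triangularSolution lam c := by
  funext n
  induction n using Nat.strong_induction_on with
  | _ n ih =>
    cases n with
    | zero => rw [hb0, triangularSolution_zero]
    | succ n =>
      have hlower : ∑ ℓ ∈ Finset.range (n + 1), b ℓ * c (n + 1) ℓ =
          ∑ ℓ ∈ Finset.range (n + 1), triangularSolution lam c ℓ * c (n + 1) ℓ :=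
        Finset.sum_congr rfl fun ℓ hℓ => by rw [ih ℓ (Finset.mem_range.mp hℓ)]
      rw [triangularSolution_succ, ← hlower]
      exact (triangular_equation_succ_iff (hdiag n) b).mp (hb (n + 1))

theorem existsUnique_triangular_solution (h0 : c 0 0 = lam)
    (hdiag : ∀ n, c (n + 1) (n + 1) ≠ lam) :
    ∃! b : ℕ → K, b 0 = 1 ∧ ∀ n, ∑ ℓ ∈ Finset.range (n + 1), b ℓ * c n ℓ = lam * b n :=
  ⟨triangularSolution lam c, ⟨triangularSolution_zero lam c, triangularSolution_spec h0 hdiag⟩,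
    fun _ hb => eq_triangularSolution hdiag hb.1 hb.2⟩

end TriangularSystem

theorem stmt17 {K : Type*} [Field K] (lam : K) (hlam0 : lam ≠ 0)
    (hroot : ∀ n : ℕ, 1 ≤ n → lam ^ n ≠ 1) (a : ℕ → K) :
    ∃! b : ℕ → K, b 0 = 1 ∧ ∀ n : ℕ,
      ∑ ℓ ∈ Finset.range (n + 1),
        b ℓ * (PowerSeries.coeff (R := K) (n + 1))
          ((PowerSeries.mk (fun m => if m = 0 then 0 else if m = 1 then lam else a (m - 1))) ^ (ℓ + 1))
      = lam * b n := by
  set f : PowerSeries K :=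
    PowerSeries.mk (fun m => if m = 0 then 0 else if m = 1 then lam else a (m - 1))
  have hdiag (n : ℕ) : PowerSeries.coeff (n + 1) (f ^ (n + 1)) = lam ^ (n + 1) := by
    rw [PowerSeries.coeff_self_pow_of_constantCoeff_eq_zero (by simp [f])]
    simp [f]
  refine existsUnique_triangular_solution (by simpa using hdiag 0) fun n h => ?_
  rw [hdiag, pow_succ, mul_eq_right₀ hlam0] at h
  exact hroot (n + 1) n.succ_pos h
end
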